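/- Let (N,v) be a minimal incomplete game with n ≥ 3 players, v({i}) ≥ 0 for all i ∈ N, and total excess Δ > 0. Then for every k ∈ N and every positive extension w of (N,v), the imputation I^k does not belong to the prekernel K*(w). -/
import Mathlib


open Finset

/-- The Shapley value `φ_i(w) = (1/n) ∑_{S ⊆ N∖{i}} C(n-1,|S|)⁻¹ (w(S∪{i}) - w(S))`. -/
noncomputable def shapley (n : ℕ) (w : Finset (Fin n) → ℝ) (i : Fin n) : ℝ :=
  (1 / (n : ℝ)) * ∑ S ∈ (Finset.univ.erase i).powerset,
    ((Nat.choose (n - 1) S.card : ℝ))⁻¹ * (w (insert i S) - w S)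

/-- A game is convex if `w(S) + w(T) ≤ w(S ∪ T) + w(S ∩ T)` for all coalitions. -/
def IsConvexGame {n : ℕ} (w : Finset (Fin n) → ℝ) : Prop :=
  ∀ S T : Finset (Fin n), w S + w T ≤ w (S ∪ T) + w (S ∩ T)

/-- The upper vector `b^w_i = w(N) - w(N∖{i})`. -/
noncomputable def upperVec {n : ℕ} (w : Finset (Fin n) → ℝ) (i : Fin n) : ℝ :=
  w Finset.univ - w (Finset.univ.erase i)

/-- The gap function `g^w(S) = ∑_{i∈S} b^w_i - w(S)`. -/
noncomputable def gap {n : ℕ} (w : Finset (Fin n) → ℝ) (S : Finset (Fin n)) : ℝ :=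
  (∑ i ∈ S, upperVec w i) - w S

/-- A game is 1-convex if `∑ b^w_i ≥ w(N)` and
`w(S) ≤ w(N) - ∑_{i ∈ N∖S} b^w_i` for every nonempty `S`. -/
def IsOneConvex {n : ℕ} (w : Finset (Fin n) → ℝ) : Prop :=
  w Finset.univ ≤ (∑ i, upperVec w i) ∧
  ∀ S : Finset (Fin n), S.Nonempty →
    w S ≤ w Finset.univ - ∑ i ∈ Finset.univ \ S, upperVec w i

/-- `w` is an extension of the minimal incomplete game given by singleton values `v`
and grand-coalition value `vN`. -/
def IsExtension {n : ℕ} (v : Fin n → ℝ) (vN : ℝ) (w : Finset (Fin n) → ℝ) : Prop :=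
  w ∅ = 0 ∧ (∀ i, w {i} = v i) ∧ w Finset.univ = vN

/-- Harsanyi dividend `d_w(T) = ∑_{S ⊆ T} (-1)^{|T|-|S|} w(S)`. -/
noncomputable def dividend {n : ℕ} (w : Finset (Fin n) → ℝ) (T : Finset (Fin n)) : ℝ :=
  ∑ S ∈ T.powerset, (-1 : ℝ) ^ (T.card - S.card) * w S

/-- A game is positive if all Harsanyi dividends of nonempty coalitions are nonnegative. -/
def IsPositive {n : ℕ} (w : Finset (Fin n) → ℝ) : Prop :=
  ∀ T : Finset (Fin n), T.Nonempty → 0 ≤ dividend w T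

/-- The extreme game `v^k`. -/
noncomputable def vgame (n : ℕ) (v : Fin n → ℝ) (Δ : ℝ) (k : Fin n)
    (S : Finset (Fin n)) : ℝ :=
  if 2 ≤ S.card ∧ k ∈ S then (∑ j ∈ S, v j) + Δ else ∑ j ∈ S, v j

/-- The extreme game `v_T` (for `T` with `|T| ≥ 2`). -/
noncomputable def vTgame (n : ℕ) (v : Fin n → ℝ) (Δ : ℝ) (T : Finset (Fin n))
    (S : Finset (Fin n)) : ℝ :=
  if T ⊆ S then (∑ j ∈ S, v j) + Δ else ∑ j ∈ S, v j

/-- The extreme-ray game `e_T`. -/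
def eTgame (n : ℕ) (T S : Finset (Fin n)) : ℝ := if S = T then -1 else 0

/-- The index set `E = {T ⊆ N : 2 ≤ |T| ≤ n-2}`. -/
def raysIndex (n : ℕ) : Finset (Finset (Fin n)) :=
  Finset.univ.filter (fun T => 2 ≤ T.card ∧ T.card ≤ n - 2)

/-- The index set `N₁ = {T ⊆ N : |T| ≥ 2}`. -/
def coalN1 (n : ℕ) : Finset (Finset (Fin n)) :=
  Finset.univ.filter (fun T => 2 ≤ T.card)

/-- The convex combination `w_α = ∑_k α_k v^k`. -/
noncomputable def walpha (n : ℕ) (v : Fin n → ℝ) (Δ : ℝ) (α : Fin n → ℝ)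
    (S : Finset (Fin n)) : ℝ :=
  ∑ k, α k * vgame n v Δ k S

/-- The game `w_{α,β} = ∑_k α_k v^k + ∑_{T∈E} β_T e_T`. -/
noncomputable def walphabeta (n : ℕ) (v : Fin n → ℝ) (Δ : ℝ) (α : Fin n → ℝ)
    (β : Finset (Fin n) → ℝ) (S : Finset (Fin n)) : ℝ :=
  (∑ k, α k * vgame n v Δ k S) + ∑ T ∈ raysIndex n, β T * eTgame n T S

/-- The game `w_A = ∑_{T∈N₁} α_T v_T`. -/
noncomputable def wAgame (n : ℕ) (v : Fin n → ℝ) (Δ : ℝ) (A : Finset (Fin n) → ℝ)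
    (S : Finset (Fin n)) : ℝ :=
  ∑ T ∈ coalN1 n, A T * vTgame n v Δ T S

/-- The imputation set `I(v)`. -/
def imputations (n : ℕ) (v : Fin n → ℝ) (vN : ℝ) : Set (Fin n → ℝ) :=
  {x | (∑ i, x i) = vN ∧ ∀ i, v i ≤ x i}

/-- The imputation `I^k`. -/
noncomputable def Ik (n : ℕ) (v : Fin n → ℝ) (Δ : ℝ) (k : Fin n) : Fin n → ℝ :=
  fun i => if i = k then v i + Δ else v i

/-- The imputation `I^α`. -/
noncomputable def Ialpha (n : ℕ) (v : Fin n → ℝ) (Δ : ℝ) (α : Fin n → ℝ) : Fin n → ℝ :=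
  fun i => v i + α i * Δ

/-- The core of a game. -/
def core {n : ℕ} (w : Finset (Fin n) → ℝ) : Set (Fin n → ℝ) :=
  {x | (∑ i, x i) = w Finset.univ ∧ ∀ S : Finset (Fin n), w S ≤ ∑ i ∈ S, x i}

/-- The marginal vector `m_σ^w`. -/
noncomputable def margVec {n : ℕ} (w : Finset (Fin n) → ℝ) (σ : Equiv.Perm (Fin n))
    (i : Fin n) : ℝ :=
  w (insert i (Finset.univ.filter (fun j => σ j < σ i))) -
    w (Finset.univ.filter (fun j => σ j < σ i))

/-- The Weber set: the convex hull of all marginal vectors. -/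
noncomputable def weber {n : ℕ} (w : Finset (Fin n) → ℝ) : Set (Fin n → ℝ) :=
  convexHull ℝ {m | ∃ σ : Equiv.Perm (Fin n), m = margVec w σ}

/-- The maximal surplus `s_{ij}(x,w) = max {w(S) - x(S) : i ∈ S, j ∉ S}`. -/
noncomputable def surplus {n : ℕ} (w : Finset (Fin n) → ℝ) (x : Fin n → ℝ)
    (i j : Fin n) : ℝ :=
  sSup {r : ℝ | ∃ S : Finset (Fin n), i ∈ S ∧ j ∉ S ∧ r = w S - ∑ m ∈ S, x m}

/-- The prekernel of a game. -/
def prekernel {n : ℕ} (w : Finset (Fin n) → ℝ) : Set (Fin n → ℝ) :=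
  {x | (∑ i, x i) = w Finset.univ ∧
    ∀ i j : Fin n, i ≠ j → surplus w x i j = surplus w x j i}

/-- Möbius inversion: the sum of dividends over subsets of `S` recovers `w S`. -/
lemma sum_dividend_powerset {n : ℕ} (w : Finset (Fin n) → ℝ) (S : Finset (Fin n)) :
    ∑ T ∈ S.powerset, dividend w T = w S := by
  unfold dividend
  rw [Finset.sum_comm' (s' := fun R => S.powerset.filter (fun T => R ⊆ T)) (t' := S.powerset)
    (fun T R => by
      simp only [Finset.mem_powerset, Finset.mem_filter]
      constructor
      · rintro ⟨h1, h2⟩; exact ⟨⟨h1, h2⟩, h2.trans h1⟩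
      · rintro ⟨⟨h1, h2⟩, _⟩; exact ⟨h1, h2⟩)]
  have key : ∀ R ∈ S.powerset,
      (∑ T ∈ S.powerset.filter (fun T => R ⊆ T), (-1 : ℝ) ^ (T.card - R.card) * w R)
        = if R = S then w S else 0 := by
    intro R hR
    rw [Finset.mem_powerset] at hR
    have himg : S.powerset.filter (fun T => R ⊆ T)
        = (S \ R).powerset.image (fun U => R ∪ U) := by
      ext T
      simp only [Finset.mem_filter, Finset.mem_powerset, Finset.mem_image]
      constructor
      · rintro ⟨hTS, hRT⟩
        exact ⟨T \ R, Finset.sdiff_subset_sdiff hTS (Finset.Subset.refl R),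
          Finset.union_sdiff_of_subset hRT⟩
      · rintro ⟨U, hU, rfl⟩
        exact ⟨Finset.union_subset hR (hU.trans Finset.sdiff_subset),
          Finset.subset_union_left⟩
    have hinj : ∀ U1 ∈ (S \ R).powerset, ∀ U2 ∈ (S \ R).powerset,
        R ∪ U1 = R ∪ U2 → U1 = U2 := by
      intro U1 h1 U2 h2 he
      rw [Finset.mem_powerset] at h1 h2
      have d1 : Disjoint R U1 := (Finset.disjoint_sdiff (s := R) (t := S)).mono_right h1
      have d2 : Disjoint R U2 := (Finset.disjoint_sdiff (s := R) (t := S)).mono_right h2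
      rw [← Finset.union_sdiff_cancel_left d1, ← Finset.union_sdiff_cancel_left d2, he]
    rw [himg, Finset.sum_image hinj]
    have hterm : ∀ U ∈ (S \ R).powerset,
        (-1 : ℝ) ^ ((R ∪ U).card - R.card) * w R = (-1 : ℝ) ^ U.card * w R := by
      intro U hU
      rw [Finset.mem_powerset] at hU
      have d1 : Disjoint R U := (Finset.disjoint_sdiff (s := R) (t := S)).mono_right hU
      rw [Finset.card_union_of_disjoint d1, Nat.add_sub_cancel_left]
    rw [Finset.sum_congr rfl hterm, ← Finset.sum_mul]
    have hz : (∑ U ∈ (S \ R).powerset, (-1 : ℝ) ^ U.card)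
        = if S \ R = ∅ then 1 else 0 := by
      have h := Finset.sum_powerset_neg_one_pow_card (x := S \ R)
      have := congrArg (fun z : ℤ => (z : ℝ)) h
      push_cast at this
      rw [this]
    rw [hz]
    by_cases hRS : R = S
    · subst hRS; simp
    · have : S \ R ≠ ∅ := by
        intro h
        exact hRS (Finset.Subset.antisymm hR
          ((Finset.sdiff_eq_empty_iff_subset).mp h))
      rw [if_neg this, if_neg hRS, zero_mul]
  rw [Finset.sum_congr rfl key, Finset.sum_ite_eq' S.powerset S (fun _ => w S),
    if_pos (Finset.mem_powerset.mpr (Finset.Subset.refl S))]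

/-- Dividend of a singleton. -/
lemma dividend_singleton {n : ℕ} (w : Finset (Fin n) → ℝ) (h0 : w ∅ = 0) (i : Fin n) :
    dividend w {i} = w {i} := by
  unfold dividend
  have hp : ({i} : Finset (Fin n)).powerset = {∅, {i}} := by
    ext T
    simp [Finset.subset_singleton_iff]
  rw [hp, Finset.sum_pair (Ne.symm (Finset.singleton_ne_empty i))]
  simp [h0]

/-- Decomposition of `w S` into singleton values and higher dividends. -/
lemma w_decomp {n : ℕ} (w : Finset (Fin n) → ℝ) (h0 : w ∅ = 0) (S : Finset (Fin n)) :
    w S = (∑ i ∈ S, w {i})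
      + ∑ T ∈ S.powerset.filter (fun T => 2 ≤ T.card), dividend w T := by
  have hsplit := Finset.sum_filter_add_sum_filter_not S.powerset
    (fun T => 2 ≤ T.card) (dividend w)
  rw [sum_dividend_powerset] at hsplit
  have hset : S.powerset.filter (fun T => ¬ 2 ≤ T.card)
      = insert ∅ (S.image fun i => ({i} : Finset (Fin n))) := by
    ext T
    simp only [Finset.mem_filter, Finset.mem_powerset, Finset.mem_insert,
      Finset.mem_image, not_le]
    constructor
    · rintro ⟨hTS, hc⟩
      have hc1 : T.card ≤ 1 := by omega
      rcases T.eq_empty_or_nonempty with rfl | ⟨a, haT⟩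
      · exact Or.inl rfl
      · have hTa : T = {a} := by
          apply Finset.Subset.antisymm
          · intro b hb
            have := Finset.card_le_one.mp hc1 b hb a haT
            simp [this]
          · exact Finset.singleton_subset_iff.mpr haT
        subst hTa
        exact Or.inr ⟨a, by simpa using hTS, rfl⟩
    · rintro (rfl | ⟨a, haS, rfl⟩)
      · exact ⟨Finset.empty_subset S, by simp⟩
      · exact ⟨Finset.singleton_subset_iff.mpr haS, by simp⟩
  have hnot : (∅ : Finset (Fin n)) ∉ S.image (fun i => ({i} : Finset (Fin n))) := by
    intro h
    obtain ⟨a, -, ha⟩ := Finset.mem_image.mp h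
    exact Finset.singleton_ne_empty a ha
  have hlow : ∑ T ∈ S.powerset.filter (fun T => ¬ 2 ≤ T.card), dividend w T
      = ∑ i ∈ S, w {i} := by
    rw [hset, Finset.sum_insert hnot,
      Finset.sum_image (by intro a _ b _ h; exact Finset.singleton_injective h)]
    have : dividend w ∅ = 0 := by simp [dividend, h0]
    rw [this, zero_add]
    exact Finset.sum_congr rfl fun i _ => dividend_singleton w h0 i
  linarith

/-- for `Δ > 0` and nonnegative singleton values, `I^k` is not in the
prekernel of any positive extension. -/
theorem stmt13 (n : ℕ) (hn : 3 ≤ n) (v : Fin n → ℝ) (hv : ∀ i, 0 ≤ v i)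
    (vN : ℝ) (Δ : ℝ) (hΔdef : Δ = vN - ∑ i, v i) (hΔ : 0 < Δ) :
    ∀ k : Fin n, ∀ w : Finset (Fin n) → ℝ,
      IsPositive w → IsExtension v vN w → Ik n v Δ k ∉ prekernel w := by
  classical
  intro k w hwpos hext hker
  obtain ⟨h0, h1, hN⟩ := hext
  obtain ⟨-, hsur⟩ := hker
  set x : Fin n → ℝ := Ik n v Δ k with hx
  set D : Finset (Fin n) → ℝ :=
    fun S => ∑ T ∈ S.powerset.filter (fun T => 2 ≤ T.card), dividend w T with hD
  have hwS : ∀ S : Finset (Fin n), w S = (∑ i ∈ S, v i) + D S := by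
    intro S
    rw [w_decomp w h0 S]
    congr 1
    exact Finset.sum_congr rfl fun i _ => h1 i
  have hDN : D Finset.univ = Δ := by
    have h := hwS Finset.univ
    rw [hN] at h
    rw [hΔdef]
    linarith
  have hDnonneg : ∀ (S T : Finset (Fin n)),
      T ∈ S.powerset.filter (fun T => 2 ≤ T.card) → 0 ≤ dividend w T := by
    intro S T hT
    rw [Finset.mem_filter] at hT
    exact hwpos T (Finset.card_pos.mp (by omega))
  have hsubD : ∀ S : Finset (Fin n), S.powerset.filter (fun T => 2 ≤ T.card)
      ⊆ (Finset.univ : Finset (Fin n)).powerset.filter (fun T => 2 ≤ T.card) := by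
    intro S T hT
    rw [Finset.mem_filter] at hT ⊢
    exact ⟨Finset.mem_powerset.mpr (Finset.subset_univ T), hT.2⟩
  have hDle : ∀ S : Finset (Fin n), D S ≤ Δ := by
    intro S
    rw [← hDN]
    apply Finset.sum_le_sum_of_subset_of_nonneg (hsubD S)
    intro T hT _
    exact hDnonneg _ T hT
  have hxS : ∀ S : Finset (Fin n), k ∈ S → ∑ m ∈ S, x m = (∑ m ∈ S, v m) + Δ := by
    intro S hk
    have hterm : ∀ m ∈ S, x m = v m + (if m = k then Δ else 0) := by
      intro m _
      by_cases h : m = k <;> simp [hx, Ik, h]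
    rw [Finset.sum_congr rfl hterm, Finset.sum_add_distrib,
      Finset.sum_ite_eq' S k (fun _ => Δ), if_pos hk]
  have hxi : ∀ i : Fin n, i ≠ k → x i = v i := by
    intro i hi; simp [hx, Ik, hi]
  have hfin : ∀ a b : Fin n,
      {r : ℝ | ∃ S : Finset (Fin n), a ∈ S ∧ b ∉ S ∧ r = w S - ∑ m ∈ S, x m}.Finite := by
    intro a b
    apply Set.Finite.subset
      (Set.finite_range (fun S : Finset (Fin n) => w S - ∑ m ∈ S, x m))
    rintro r ⟨S, -, -, rfl⟩
    exact ⟨S, rfl⟩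
  have key : ∀ T : Finset (Fin n), 2 ≤ T.card → ∀ i : Fin n, i ≠ k → i ∈ T →
      dividend w T = 0 := by
    intro T hT2 i hik hiT
    have h0le : (0 : ℝ) ≤ surplus w x i k := by
      have hmem : w {i} - ∑ m ∈ {i}, x m ∈
          {r : ℝ | ∃ S : Finset (Fin n), i ∈ S ∧ k ∉ S ∧ r = w S - ∑ m ∈ S, x m} :=
        ⟨{i}, Finset.mem_singleton_self i,
          fun h => hik (Finset.mem_singleton.mp h).symm, rfl⟩
      have hle := le_csSup ((hfin i k).bddAbove) hmem
      have hz : w {i} - ∑ m ∈ {i}, x m = 0 := by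
        rw [Finset.sum_singleton, hxi i hik, h1 i]; ring
      rw [hz] at hle
      exact hle
    have heq := hsur k i (Ne.symm hik)
    have hneki : {r : ℝ | ∃ S : Finset (Fin n),
        k ∈ S ∧ i ∉ S ∧ r = w S - ∑ m ∈ S, x m}.Nonempty :=
      ⟨w {k} - ∑ m ∈ {k}, x m, {k}, Finset.mem_singleton_self k,
        fun h => hik (Finset.mem_singleton.mp h), rfl⟩
    have hmem := hneki.csSup_mem (hfin k i)
    obtain ⟨S, hkS, hiS, hSval⟩ := hmem
    have hge : 0 ≤ w S - ∑ m ∈ S, x m := by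
      have hs2 : surplus w x k i = w S - ∑ m ∈ S, x m := hSval
      rw [← hs2, heq]
      exact h0le
    have hDS : Δ ≤ D S := by
      have e1 := hxS S hkS
      have e2 := hwS S
      rw [e1, e2] at hge
      linarith
    have hrest : ∑ T ∈ ((Finset.univ : Finset (Fin n)).powerset.filter
        (fun T => 2 ≤ T.card) \ S.powerset.filter (fun T => 2 ≤ T.card)),
        dividend w T = 0 := by
      have hsd := Finset.sum_sdiff (f := dividend w) (hsubD S)
      have hDSeq : D S = Δ := le_antisymm (hDle S) hDS
      have e1 : ∑ T ∈ S.powerset.filter (fun T => 2 ≤ T.card), dividend w T = Δ := hDSeq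
      have e2 : ∑ T ∈ (Finset.univ : Finset (Fin n)).powerset.filter
          (fun T => 2 ≤ T.card), dividend w T = Δ := hDN
      rw [e1, e2] at hsd
      linarith
    have hTmem : T ∈ ((Finset.univ : Finset (Fin n)).powerset.filter
        (fun T => 2 ≤ T.card) \ S.powerset.filter (fun T => 2 ≤ T.card)) := by
      rw [Finset.mem_sdiff, Finset.mem_filter, Finset.mem_filter, Finset.mem_powerset,
        Finset.mem_powerset]
      refine ⟨⟨Finset.subset_univ T, hT2⟩, fun h => ?_⟩
      exact hiS (h.1 hiT)
    have := (Finset.sum_eq_zero_iff_of_nonneg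
      (fun T hT => hDnonneg Finset.univ T (Finset.mem_sdiff.mp hT).1)).mp hrest T hTmem
    exact this
  have hzero : D Finset.univ = 0 := by
    apply Finset.sum_eq_zero
    intro T hT
    rw [Finset.mem_filter] at hT
    obtain ⟨a, haT, b, hbT, hab⟩ := Finset.one_lt_card.mp (by omega : 1 < T.card)
    by_cases hak : a = k
    · exact key T hT.2 b (by rw [← hak]; exact Ne.symm hab) hbT
    · exact key T hT.2 a hak haT
  rw [hDN] at hzero
  linarith
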